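/- Mellin transform of the boundary Fourier series. Let ν ∈ ℂ, let N ≥ 1 be an integer, and let (v_k)_{k∈ℤ∖{0}} be a bounded family of vectors in V (a finite-dimensional complex normed space). Define f : ℂ∖ℝ → V by f(z) = Σ_{k>0} k^ν e^{2πikz/N} v_k for Im z > 0 and f(z) = -Σ_{k<0} |k|^ν e^{2πikz/N} v_k for Im z < 0 (these series converge absolutely and locally uniformly). Then for ε ∈ {0,1} and every s ∈ ℂ with Re s > max(0, Re ν + 1): ∫₀^∞ y^{s-1} ( f(iy) - (-1)^ε f(-iy) ) dy = Γ(s) N^ν (2π)^{-s} Σ_{k≠0} sgn(k)^ε (N/|k|)^{s-ν} v_k, where the integral and the Dirichlet series converge absolutely. -/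

import Mathlib

/-!
On the imaginary axis both half-plane expansions become exponentially decaying series, and
together they give `f(iy) - (-1)^ε f(-iy) = Σ_{k≠0} sgn(k)^ε |k|^ν e^{-2π|k|y/N} v_k`.
Since `∫₀^∞ y^{s-1} e^{-py} dy = Γ(s) p^{-s}`, the Mellin transform can be taken termwise as soon
as `Σ ‖v_k‖ |k|^{Re ν} p_k^{-Re s}` converges, which is where `Re s > Re ν + 1` enters; the
identity `|k|^ν (2π|k|/N)^{-s} = N^ν (2π)^{-s} (N/|k|)^{s-ν}` turns the result into the
Dirichlet series.
-/

open Complex Filter MeasureTheory Set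

section IntegrableTsum

variable {α E ι : Type*} [MeasurableSpace α] {μ : Measure α} [NormedAddCommGroup E]
  [CompleteSpace E] [Countable ι]

theorem integrable_tsum_of_summable_integral_norm {F : ι → α → E}
    (hF_int : ∀ i, Integrable (F i) μ) (hF_sum : Summable fun i ↦ ∫ a, ‖F i a‖ ∂μ) :
    Integrable (fun a ↦ ∑' i, F i a) μ := by
  have h_enorm : ∀ i, AEMeasurable (fun a ↦ ‖F i a‖ₑ) μ := fun i ↦ (hF_int i).1.enorm
  have h_lintegral : ∀ i, ∫⁻ a, ‖F i a‖ₑ ∂μ = ENNReal.ofReal (∫ a, ‖F i a‖ ∂μ) := fun i ↦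
    (ofReal_integral_norm_eq_lintegral_enorm (hF_int i)).symm
  have h_fin : ∫⁻ a, ∑' i, ‖F i a‖ₑ ∂μ < ⊤ := by
    rw [lintegral_tsum h_enorm, funext h_lintegral,
      ← ENNReal.ofReal_tsum_of_nonneg (fun i ↦ integral_nonneg fun a ↦ norm_nonneg _) hF_sum]
    exact ENNReal.ofReal_lt_top
  have h_summable : ∀ᵐ a ∂μ, Summable fun i ↦ F i a := by
    filter_upwards [ae_lt_top' (AEMeasurable.tsum h_enorm) h_fin.ne] with a ha
    exact Summable.of_norm (ENNReal.summable_toReal ha.ne |>.congr fun i ↦ by simp)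
  refine ⟨aestronglyMeasurable_of_tendsto_ae atTop
    (fun s : Finset ι ↦ s.aestronglyMeasurable_sum fun i _ ↦ (hF_int i).1) ?_, ?_⟩
  · filter_upwards [h_summable] with a ha
    simp only [Finset.sum_apply]
    exact ha.hasSum
  · exact (lintegral_mono fun a ↦ enorm_tsum_le_tsum_enorm).trans_lt h_fin

end IntegrableTsum

section Mellin

variable {E : Type*} [NormedAddCommGroup E] [NormedSpace ℂ E] {s : ℂ}

theorem HasMellin.smul_const [CompleteSpace E] {f : ℝ → ℂ} {m : ℂ} (hf : HasMellin f s m) (w : E) :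
    HasMellin (fun t ↦ f t • w) s (m • w) := by
  refine ⟨by simpa only [MellinConvergent, IntegrableOn, smul_assoc] using hf.1.smul_const w, ?_⟩
  simp only [mellin, ← smul_assoc, ← hf.2]
  exact integral_smul_const _ w

theorem hasMellin_exp_neg_mul {p : ℝ} (hp : 0 < p) (hs : 0 < s.re) :
    HasMellin (fun t : ℝ ↦ (Real.exp (-(p * t)) : ℂ)) s ((p : ℂ) ^ (-s) * Gamma s) := by
  have h_exp : HasMellin (fun t : ℝ ↦ (Real.exp (-t) : ℂ)) s (Gamma s) := by
    refine ⟨?_, by rw [← GammaIntegral_eq_mellin, Gamma_eq_integral hs]⟩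
    simpa only [MellinConvergent, smul_eq_mul, mul_comm] using GammaIntegral_convergent hs
  exact ⟨(MellinConvergent.comp_mul_left hp).2 h_exp.1, by
    rw [mellin_comp_mul_left (fun t : ℝ ↦ (Real.exp (-t) : ℂ)) s hp, h_exp.2, smul_eq_mul]⟩

theorem hasSum_mellin_of_summable_integral_norm [CompleteSpace E] {ι : Type*} [Countable ι]
    {G : ι → ℝ → E} {F : ℝ → E} (hG : ∀ i, MellinConvergent (G i) s)
    (hF : ∀ t ∈ Ioi (0 : ℝ), HasSum (G · t) (F t))
    (h_sum : Summable fun i ↦ ∫ t in Ioi (0 : ℝ), ‖(t : ℂ) ^ (s - 1) • G i t‖) :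
    MellinConvergent F s ∧ HasSum (fun i ↦ mellin (G i) s) (mellin F s) := by
  have h_eq : EqOn (fun t : ℝ ↦ ∑' i, (t : ℂ) ^ (s - 1) • G i t)
      (fun t ↦ (t : ℂ) ^ (s - 1) • F t) (Ioi 0) :=
    fun t ht ↦ ((hF t ht).const_smul _).tsum_eq
  refine ⟨IntegrableOn.congr_fun (integrable_tsum_of_summable_integral_norm hG h_sum) h_eq
    measurableSet_Ioi, ?_⟩
  rw [mellin, ← setIntegral_congr_fun measurableSet_Ioi h_eq]
  exact hasSum_integral_of_summable_integral_norm hG h_sum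

theorem integral_norm_cpow_smul_exp_neg_mul_smul {p : ℝ} (hp : 0 < p) (hs : 0 < s.re)
    (a : ℂ) (w : E) :
    ∫ t in Ioi (0 : ℝ), ‖(t : ℂ) ^ (s - 1) • (a * Real.exp (-(p * t))) • w‖ =
      Real.Gamma s.re * ‖(a / (p : ℂ) ^ s) • w‖ := by
  have h_norm : EqOn (fun t : ℝ ↦ ‖(t : ℂ) ^ (s - 1) • (a * Real.exp (-(p * t))) • w‖)
      (fun t ↦ ‖a‖ * ‖w‖ * (t ^ (s.re - 1) * Real.exp (-(p * t)))) (Ioi 0) := fun t ht ↦ by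
    simp only [norm_smul, norm_mul, norm_cpow_eq_rpow_re_of_pos ht, sub_re, one_re, norm_real,
      Real.norm_eq_abs, Real.abs_exp]
    ring
  rw [setIntegral_congr_fun measurableSet_Ioi h_norm, integral_const_mul,
    Real.integral_rpow_mul_exp_neg_mul_Ioi hs hp, norm_smul, norm_div,
    norm_cpow_eq_rpow_re_of_pos hp, one_div, Real.inv_rpow hp.le]
  ring

theorem hasSum_mellin_smul [CompleteSpace E] {ι : Type*} [Countable ι] {a : ι → ℂ} {p : ι → ℝ}
    {w : ι → E} {F : ℝ → E} (hp : ∀ i, 0 < p i) (hs : 0 < s.re)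
    (hF : ∀ t ∈ Ioi (0 : ℝ), HasSum (fun i ↦ (a i * Real.exp (-(p i * t))) • w i) (F t))
    (h_sum : Summable fun i ↦ ‖(a i / (p i : ℂ) ^ s) • w i‖) :
    MellinConvergent F s ∧ HasSum (fun i ↦ Gamma s • (a i / (p i : ℂ) ^ s) • w i) (mellin F s) := by
  have hG : ∀ i, HasMellin (fun t : ℝ ↦ (a i * Real.exp (-(p i * t))) • w i) s
      (Gamma s • (a i / (p i : ℂ) ^ s) • w i) := fun i ↦ by
    have h := (hasMellin_const_smul (hasMellin_exp_neg_mul (hp i) hs).1 (a i)).smul_const (w i)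
    simp only [(hasMellin_exp_neg_mul (hp i) hs).2, smul_eq_mul] at h
    convert h using 1
    rw [smul_smul, cpow_neg, div_eq_mul_inv]
    congr 1
    ring
  have h_int := hasSum_mellin_of_summable_integral_norm (fun i ↦ (hG i).1) hF
    (by simpa only [integral_norm_cpow_smul_exp_neg_mul_smul (hp _) hs] using
      h_sum.mul_left (Real.Gamma s.re))
  exact ⟨h_int.1, by simpa only [(hG _).2] using h_int.2⟩

end Mellin

theorem Int.hasSum_subtype_ne_zero {E : Type*} [AddCommMonoid E] [TopologicalSpace E]
    [ContinuousAdd E] {g : {k : ℤ // k ≠ 0} → E} {x y : E}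
    (hpos : HasSum (fun k : {k : ℤ // 0 < k} ↦ g ⟨k, k.2.ne'⟩) x)
    (hneg : HasSum (fun k : {k : ℤ // k < 0} ↦ g ⟨k, k.2.ne⟩) y) :
    HasSum g (x + y) := by
  let S : Set {k : ℤ // k ≠ 0} := {k | 0 < k.1}
  let e : {k : ℤ // 0 < k} ≃ S := (Equiv.subtypeSubtypeEquivSubtype fun h ↦ h.ne').symm
  let e' : {k : ℤ // k < 0} ≃ ↥Sᶜ :=
    ⟨fun k ↦ ⟨⟨k, k.2.ne⟩, not_lt.2 k.2.le⟩, fun k ↦ ⟨k.1, lt_of_le_of_ne (not_lt.1 k.2) k.1.2⟩,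
      fun _ ↦ rfl, fun _ ↦ rfl⟩
  have h₁ : HasSum (g ∘ (↑) : S → E) x := e.hasSum_iff.1 hpos
  have h₂ : HasSum (g ∘ (↑) : ↥Sᶜ → E) y := e'.hasSum_iff.1 hneg
  exact h₁.add_isCompl isCompl_compl h₂

theorem exp_two_pi_I_mul_mul_I_div (c t N : ℝ) :
    Complex.exp (2 * Real.pi * I * c * (t * I) / N) = Real.exp (-(2 * Real.pi * c / N * t)) := by
  push_cast
  congr 1
  linear_combination (2 * Real.pi * c * t / N : ℂ) * I_sq

theorem hasSum_boundary_fourier {V : Type*} [NormedAddCommGroup V] [NormedSpace ℂ V]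
    (ν : ℂ) (N : ℕ) (v : {k : ℤ // k ≠ 0} → V) (ε : ℕ) {t : ℝ} {x y : V}
    (hup : HasSum (fun k : {k : ℤ // 0 < k} ↦
      (((k.1 : ℤ) : ℂ) ^ ν * Complex.exp (2 * Real.pi * I * (k.1 : ℂ) * (t * I) / N)) •
        v ⟨k.1, k.2.ne'⟩) x)
    (hdown : HasSum (fun k : {k : ℤ // k < 0} ↦
      (((|k.1| : ℤ) : ℂ) ^ ν * Complex.exp (2 * Real.pi * I * (k.1 : ℂ) * (-(t * I)) / N)) •
        v ⟨k.1, k.2.ne⟩) (-y)) :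
    HasSum (fun k : {k : ℤ // k ≠ 0} ↦
      ((Int.sign k.1 : ℂ) ^ ε * ((|k.1| : ℤ) : ℂ) ^ ν *
        Real.exp (-(2 * Real.pi * ((|k.1| : ℤ) : ℝ) / N * t))) • v k)
      (x - (-1 : ℂ) ^ ε • y) := by
  rw [sub_eq_add_neg, ← smul_neg]
  refine Int.hasSum_subtype_ne_zero (hup.congr_fun fun k ↦ ?_)
    ((hdown.const_smul ((-1 : ℂ) ^ ε)).congr_fun fun k ↦ ?_)
  · have hk : 0 < k.1 := k.2
    have := exp_two_pi_I_mul_mul_I_div k t N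
    push_cast at this
    simp only [Int.sign_eq_one_of_pos hk, abs_of_pos hk, this]
    push_cast
    rw [one_pow, one_mul]
  · have hk : k.1 < 0 := k.2
    have := exp_two_pi_I_mul_mul_I_div (-k.1 : ℤ) t N
    push_cast at this
    simp only [Int.sign_eq_neg_one_of_neg hk, abs_of_neg hk, smul_smul]
    push_cast
    rw [← this, mul_assoc]
    congr 1
    ring_nf

theorem ofReal_cpow_div_ofReal_mul_div_cpow {A B c : ℝ} (hA : 0 < A) (hB : 0 < B) (hc : 0 < c)
    (ν s : ℂ) :
    (A : ℂ) ^ ν / ((c * A / B : ℝ) : ℂ) ^ s =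
      (B : ℂ) ^ ν * (c : ℂ) ^ (-s) * ((B : ℂ) / A) ^ (s - ν) := by
  have h_cpow : ∀ {x : ℝ}, 0 < x → ∀ w : ℂ, (x : ℂ) ^ w = exp (Real.log x * w) := fun hx w ↦ by
    rw [cpow_def_of_ne_zero (ofReal_ne_zero.2 hx.ne'), ofReal_log hx.le]
  rw [← ofReal_div, h_cpow hA, h_cpow (by positivity), h_cpow hB, h_cpow hc, h_cpow (div_pos hB hA),
    Real.log_div (by positivity) hB.ne', Real.log_mul hc.ne' hA.ne', Real.log_div hB.ne' hA.ne',
    ← exp_sub, ← exp_add, ← exp_add]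
  congr 1
  push_cast
  ring

theorem norm_intCast_sign_pow {k : ℤ} (hk : k ≠ 0) (ε : ℕ) : ‖(Int.sign k : ℂ) ^ ε‖ = 1 := by
  rcases hk.lt_or_gt with hk | hk <;> simp [Int.sign_eq_neg_one_of_neg, Int.sign_eq_one_of_pos, hk]

theorem summable_norm_sign_pow_mul_div_abs_cpow_smul {V : Type*} [NormedAddCommGroup V]
    [NormedSpace ℂ V] {v : {k : ℤ // k ≠ 0} → V} {C : ℝ} (hC : ∀ k, ‖v k‖ ≤ C) {N : ℕ}
    (hN : 0 < N) (ε : ℕ) {w : ℂ} (hw : 1 < w.re) :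
    Summable fun k : {k : ℤ // k ≠ 0} ↦
      ‖((Int.sign k.1 : ℂ) ^ ε * (((N : ℂ) / ((|k.1| : ℤ) : ℂ)) ^ w)) • v k‖ := by
  refine Summable.of_nonneg_of_le (fun _ ↦ norm_nonneg _) (fun k ↦ ?_)
    (((Real.summable_abs_int_rpow hw).subtype _).mul_left (C * (N : ℝ) ^ w.re))
  have hk : (0 : ℝ) < |(k.1 : ℝ)| := abs_pos.2 (Int.cast_ne_zero.2 k.2)
  have h_base : (N : ℂ) / ((|k.1| : ℤ) : ℂ) = ((N / |(k.1 : ℝ)| : ℝ) : ℂ) := by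
    rw [ofReal_div, ofReal_natCast, ← Int.cast_abs, ofReal_intCast]
  rw [norm_smul, norm_mul, norm_intCast_sign_pow k.2, one_mul, h_base]
  show _ ≤ C * _ * |(k.1 : ℝ)| ^ (-w.re)
  rw [norm_cpow_eq_rpow_re_of_pos (by positivity), Real.div_rpow (Nat.cast_nonneg N) hk.le]
  calc _ ≤ (N : ℝ) ^ w.re / |(k.1 : ℝ)| ^ w.re * C := by gcongr; exact hC k
    _ = _ := by rw [Real.rpow_neg hk.le]; ring

theorem mellin_boundary_fourier_series
    {V : Type} [NormedAddCommGroup V] [NormedSpace ℂ V] [FiniteDimensional ℂ V]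
    (ν : ℂ) (N : ℕ) (hN : 1 ≤ N)
    (v : {k : ℤ // k ≠ 0} → V) (hv : ∃ C : ℝ, ∀ k, ‖v k‖ ≤ C)
    (f : ℂ → V)
    (hfup : ∀ z : ℂ, 0 < z.im →
      HasSum (fun k : {k : ℤ // 0 < k} =>
        (((k.1 : ℤ) : ℂ) ^ ν * Complex.exp (2 * Real.pi * I * (k.1 : ℂ) * z / N)) •
          v ⟨k.1, k.2.ne'⟩) (f z))
    (hfdown : ∀ z : ℂ, z.im < 0 →
      HasSum (fun k : {k : ℤ // k < 0} =>
        (((|k.1| : ℤ) : ℂ) ^ ν * Complex.exp (2 * Real.pi * I * (k.1 : ℂ) * z / N)) •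
          v ⟨k.1, k.2.ne⟩) (-(f z)))
    (ε : ℕ)
    (s : ℂ) (hs : max 0 (ν.re + 1) < s.re) :
    IntegrableOn (fun y : ℝ =>
      (y : ℂ) ^ (s - 1) • (f ((y : ℂ) * I) - ((-1 : ℂ) ^ ε) • f (-((y : ℂ) * I))))
      (Set.Ioi (0 : ℝ)) ∧
    Summable (fun k : {k : ℤ // k ≠ 0} =>
      ‖((Int.sign k.1 : ℂ) ^ ε * (((N : ℂ) / ((|k.1| : ℤ) : ℂ)) ^ (s - ν))) • v k‖) ∧
    (∫ y in Set.Ioi (0 : ℝ),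
        (y : ℂ) ^ (s - 1) • (f ((y : ℂ) * I) - ((-1 : ℂ) ^ ε) • f (-((y : ℂ) * I)))) =
      (Complex.Gamma s * (N : ℂ) ^ ν * (2 * (Real.pi : ℂ)) ^ (-s)) •
        ∑' k : {k : ℤ // k ≠ 0},
          ((Int.sign k.1 : ℂ) ^ ε * (((N : ℂ) / ((|k.1| : ℤ) : ℂ)) ^ (s - ν))) • v k := by
  obtain ⟨C, hC⟩ := hv
  have hs₀ : 0 < s.re := (le_max_left _ _).trans_lt hs
  have hσ : 1 < (s - ν).re := by rw [sub_re]; linarith [le_max_right 0 (ν.re + 1)]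
  have hN₀ : (0 : ℝ) < N := by exact_mod_cast hN
  have hD := summable_norm_sign_pow_mul_div_abs_cpow_smul hC hN ε hσ
  have h_coeff : ∀ k : {k : ℤ // k ≠ 0},
      (Int.sign k.1 : ℂ) ^ ε * ((|k.1| : ℤ) : ℂ) ^ ν /
          ((2 * Real.pi * ((|k.1| : ℤ) : ℝ) / N : ℝ) : ℂ) ^ s =
        (N : ℂ) ^ ν * (2 * (Real.pi : ℂ)) ^ (-s) *
          ((Int.sign k.1 : ℂ) ^ ε * ((N : ℂ) / ((|k.1| : ℤ) : ℂ)) ^ (s - ν)) := fun k ↦ by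
    have hk : (0 : ℝ) < ((|k.1| : ℤ) : ℝ) := by exact_mod_cast abs_pos.2 k.2
    rw [mul_div_assoc, ← ofReal_intCast |k.1|,
      ofReal_cpow_div_ofReal_mul_div_cpow hk hN₀ Real.two_pi_pos, ofReal_natCast]
    push_cast
    ring
  obtain ⟨h_conv, h_mellin⟩ := hasSum_mellin_smul (w := v)
    (fun k ↦ by have := abs_pos.2 k.2; positivity) hs₀
    (fun t ht ↦ hasSum_boundary_fourier ν N v ε (hfup _ (by simpa using ht))
      (hfdown _ (by simpa using ht)))
    ((hD.mul_left ‖(N : ℂ) ^ ν * (2 * (Real.pi : ℂ)) ^ (-s)‖).congr fun k ↦ by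
      rw [h_coeff, ← norm_smul, ← mul_smul])
  refine ⟨h_conv, hD, h_mellin.unique ?_⟩
  simpa only [h_coeff, mul_smul] using
    hD.of_norm.hasSum.const_smul (Gamma s * (N : ℂ) ^ ν * (2 * (Real.pi : ℂ)) ^ (-s))
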